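/- arXiv:math/0405567 — 9 statements merged into one kernel-verified Lean document; each statement's English description precedes it below -/
import Mathlib

section
/- Let (N,+) be a finite group (written additively, not necessarily abelian) and let 𝓑 = {B₁,…,Bₛ} be a difference family on N. Then the development dev 𝓑 = {B + n : B ∈ 𝓑, n ∈ N} is a set 2-design: all its blocks have the same size k and there is a constant λ such that every pair of distinct points a, b ∈ N is contained in exactly λ blocks of dev 𝓑. -/
/-!
Right translation is a bijection of `N`, so every block `B + n` has `k` points. The pairs
`(B, n)` with `a, b ∈ B + n` correspond to the triples `(B, x, y)` with `x, y ∈ B` and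
`x - y = a - b` via `x = a - n`, `y = b - n`, so there are `λ` of them when `a ≠ b`; and since
no base block is a nontrivial translate of a base block, `(B, n) ↦ B + n` is injective, so each
block of the development is counted once.
-/

theorem eq_sub_add_of_sub_eq_sub {N : Type*} [AddGroup N] {x y a b : N} (h : x - y = a - b) :
    y = b - a + x := by
  rw [← neg_sub, ← h]
  simp [sub_eq_add_neg, add_assoc]

namespace Finset

variable {N : Type*} [AddGroup N] [DecidableEq N]

theorem mem_image_add_right_iff {B : Finset N} {a n : N} : a ∈ B.image (· + n) ↔ a - n ∈ B := by
  rw [image_add_right, mem_preimage, sub_eq_add_neg]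

theorem image_add_right_image_add_right (B : Finset N) (n m : N) :
    (B.image (· + n)).image (· + m) = B.image (· + (n + m)) := by
  simp only [image_image, Function.comp_def, add_assoc]

theorem injOn_image_add_right {𝓑 : Finset (Finset N)} (s : Finset N)
    (h𝓑 : ∀ B ∈ 𝓑, ∀ C ∈ 𝓑, ∀ n : N, B.image (· + n) = C → n = 0) :
    Set.InjOn (fun p : Finset N × N => p.1.image (· + p.2)) ↑(𝓑 ×ˢ s) := by
  rintro ⟨B, n⟩ hBn ⟨C, m⟩ hCm (h : B.image (· + n) = C.image (· + m))
  simp only [coe_product, Set.mem_prod, mem_coe] at hBn hCm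
  have hshift : B.image (· + (n - m)) = C := by
    have := congrArg (image (· + -m)) h
    simp only [image_add_right_image_add_right, add_neg_cancel, add_zero, image_id'] at this
    rwa [← sub_eq_add_neg] at this
  have hnm : n = m := sub_eq_zero.mp (h𝓑 B hBn.1 C hCm.1 _ hshift)
  subst hnm
  exact Prod.ext ((image_injective (add_left_injective n)) h) rfl

theorem card_filter_translates_eq_card_filter_differences [Fintype N]
    (𝓑 : Finset (Finset N)) (a b : N) :
    ((𝓑 ×ˢ univ).filter fun p : Finset N × N =>
        a ∈ p.1.image (· + p.2) ∧ b ∈ p.1.image (· + p.2)).card =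
      ((𝓑.sigma fun B => B ×ˢ B).filter fun p => p.2.1 - p.2.2 = a - b).card := by
  refine card_nbij' (fun p => ⟨p.1, (a - p.2, b - p.2)⟩) (fun q => (q.1, -q.2.1 + a))
    ?_ ?_ ?_ ?_
  · rintro ⟨B, n⟩ hp
    simp only [coe_filter, mem_product, mem_univ, and_true, mem_image_add_right_iff,
      Set.mem_ofPred_eq] at hp
    simp only [coe_filter, mem_sigma, mem_product, Set.mem_ofPred_eq]
    exact ⟨⟨hp.1, hp.2⟩, by simp [sub_eq_add_neg, add_assoc]⟩
  · rintro ⟨B, x, y⟩ hq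
    simp only [coe_filter, mem_sigma, mem_product, Set.mem_ofPred_eq] at hq
    obtain ⟨⟨hB, hx, hy⟩, hd⟩ := hq
    simp only [coe_filter, mem_product, mem_univ, and_true, mem_image_add_right_iff,
      Set.mem_ofPred_eq]
    refine ⟨hB, by simpa [sub_eq_add_neg, add_assoc] using hx, ?_⟩
    simpa [eq_sub_add_of_sub_eq_sub hd, sub_eq_add_neg, add_assoc] using hy
  · rintro ⟨B, n⟩ -
    simp [sub_eq_add_neg, add_assoc]
  · rintro ⟨B, x, y⟩ hq
    simp only [coe_filter, mem_sigma, mem_product, Set.mem_ofPred_eq] at hq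
    simp [eq_sub_add_of_sub_eq_sub hq.2, sub_eq_add_neg, add_assoc]

end Finset

/-- If `𝓑` is a difference family on a finite (not necessarily abelian)
additive group `N`, then the development `dev 𝓑 = {B + n : B ∈ 𝓑, n ∈ N}` is a set
2-design: all blocks have size `k` and every pair of distinct points lies in exactly
`lam` blocks. -/
theorem difference_family_development_is_2design
    {N : Type*} [AddGroup N] [Fintype N] [DecidableEq N]
    (𝓑 : Finset (Finset N)) (k lam : ℕ)
    (hsize : ∀ B ∈ 𝓑, B.card = k)
    (htrans : ∀ B ∈ 𝓑, ∀ C ∈ 𝓑, ∀ n : N,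
      B.image (· + n) = C ↔ B = C ∧ n = 0)
    (hdiff : ∀ d : N, d ≠ 0 →
      ((𝓑.sigma fun B => B ×ˢ B).filter
        (fun p => p.2.1 - p.2.2 = d)).card = lam) :
    (∀ A ∈ (𝓑 ×ˢ (Finset.univ : Finset N)).image
        (fun p : Finset N × N => p.1.image (· + p.2)),
      A.card = k) ∧
    (∀ a b : N, a ≠ b →
      (((𝓑 ×ˢ (Finset.univ : Finset N)).image
          (fun p : Finset N × N => p.1.image (· + p.2))).filter
        (fun A => a ∈ A ∧ b ∈ A)).card = lam) := by
  have hinj := Finset.injOn_image_add_right (𝓑 := 𝓑) Finset.univ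
    fun B hB C hC n h => ((htrans B hB C hC n).mp h).2
  refine ⟨?_, fun a b hab => ?_⟩
  · intro A hA
    obtain ⟨⟨B, n⟩, hBn, rfl⟩ := Finset.mem_image.mp hA
    rw [Finset.card_image_of_injective _ (add_left_injective n)]
    exact hsize B (Finset.mem_product.mp hBn).1
  · rw [Finset.filter_image, Finset.card_image_of_injOn
      (hinj.mono (Finset.coe_subset.mpr (Finset.filter_subset _ _))),
      Finset.card_filter_translates_eq_card_filter_differences, hdiff _ (sub_ne_zero.mpr hab)]
end

section
/- Let N be a finite set with a binary operation − and a set T of functions N → N satisfying: (i) for all a,b ∈ N there is a unique t ∈ T with t(a) = b; (ii) for all a,b ∈ N the equation a − x = b has a unique solution x; (iii) t(a) − t(b) = a − b for all a,b ∈ N and all t ∈ T. Then for all a,b ∈ N the equation x − a = b also has a unique solution x; hence (N,−) is a quasigroup. -/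
/-- In a finite set `N` with difference `sub` and translation set `T`
(satisfying the unique-translation, unique-difference-solution and
translation-invariance axioms), the equation `x − a = b` also has a unique solution
for all `a, b`; hence `(N, −)` is a quasigroup. -/
theorem sub_is_quasigroup
    {N : Type*} [Fintype N]
    (sub : N → N → N) (T : Set (N → N))
    (htrans : ∀ a b : N, ∃! t, t ∈ T ∧ t a = b)
    (hsub : ∀ a b : N, ∃! x, sub a x = b)
    (hinv : ∀ t ∈ T, ∀ a b : N, sub (t a) (t b) = sub a b) :
    ∀ a b : N, ∃! x, sub x a = b := by
  intro a b
  have hinj : Function.Injective (fun x => sub x a) := by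
    intro x y hxy
    simp only at hxy
    obtain ⟨t, ⟨htT, htx⟩, _⟩ := htrans x y
    -- t a = a
    have h1 : sub y (t a) = sub y a := by
      have := hinv t htT x a
      rw [htx] at this
      rw [this, hxy]
    have hta : t a = a := ((hsub y (sub y a)).unique h1 rfl)
    -- t c = c for all c
    have hid : ∀ c, t c = c := by
      intro c
      have := hinv t htT a c
      rw [hta] at this
      exact (hsub a (sub a c)).unique this rfl
    rw [← htx, hid]
  have hbij := Finite.injective_iff_bijective.mp hinj
  obtain ⟨x, hx⟩ := hbij.surjective b
  exact ⟨x, hx, fun y hy => hinj (hy.trans hx.symm)⟩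
end

section
/- Let N be a finite set with a binary operation − and a set T of functions N → N satisfying: (i) for all a,b ∈ N there is a unique t ∈ T with t(a) = b; (ii) for all a,b ∈ N the equation a − x = b has a unique solution x; (iii) t(a) − t(b) = a − b for all a,b ∈ N and all t ∈ T. Fix a₀ ∈ N and for each b ∈ N let t_b be the unique element of T with t_b(a₀) = b. Define x + y := t_y(x). Then (N,+) is a quasigroup: for all a,b ∈ N the equations a + x = b and y + a = b each have a unique solution. -/
/-- In a finite set `N` with difference `sub` and translation set `T`
(satisfying the usual axioms), fix `a₀ ∈ N` and for each `b` let `t b` be the unique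
translation with `t b a₀ = b`. Defining `x + y := t y x`, the structure `(N, +)` is a
quasigroup: `a + x = b` and `y + a = b` each have a unique solution. -/
theorem add_is_quasigroup
    {N : Type*} [Fintype N]
    (sub : N → N → N) (T : Set (N → N))
    (htrans : ∀ a b : N, ∃! t, t ∈ T ∧ t a = b)
    (hsub : ∀ a b : N, ∃! x, sub a x = b)
    (hinv : ∀ t ∈ T, ∀ a b : N, sub (t a) (t b) = sub a b)
    (a₀ : N) (t : N → (N → N))
    (ht : ∀ b : N, t b ∈ T ∧ t b a₀ = b) :
    ∀ a b : N, (∃! x, t x a = b) ∧ (∃! y, t a y = b) := by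
  intro a b
  -- key uniqueness facts
  have key : ∀ x, t x a = b → sub b x = sub a a₀ := by
    intro x hx
    have h1 : sub (t x a) (t x a₀) = sub a a₀ := hinv (t x) (ht x).1 a a₀
    rwa [hx, (ht x).2] at h1
  constructor
  · -- existence: take u ∈ T with u a = b, and x := u a₀; then t x = u
    obtain ⟨u, ⟨huT, hua⟩, _⟩ := htrans a b
    refine ⟨u a₀, ?_, ?_⟩
    · have hu : u = t (u a₀) := by
        obtain ⟨v, hv, hvuniq⟩ := htrans a₀ (u a₀)
        exact (hvuniq u ⟨huT, rfl⟩).trans (hvuniq (t (u a₀)) ⟨(ht (u a₀)).1, (ht (u a₀)).2⟩).symm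
      show t (u a₀) a = b
      rw [← hu, hua]
    · intro x hx
      obtain ⟨w, hw, hwu⟩ := hsub b (sub a a₀)
      have hu : u = t (u a₀) := by
        obtain ⟨v, hv, hvuniq⟩ := htrans a₀ (u a₀)
        exact (hvuniq u ⟨huT, rfl⟩).trans (hvuniq (t (u a₀)) ⟨(ht (u a₀)).1, (ht (u a₀)).2⟩).symm
      rw [hwu x (key x hx), hwu (u a₀) (key (u a₀) (by rw [← hu, hua]))]
  · -- t a is injective, hence bijective on a finite type
    have hinj : Function.Injective (t a) := by
      intro y₁ y₂ h
      have h1 : sub (t a y₁) (t a y₂) = sub y₁ y₂ := hinv (t a) (ht a).1 y₁ y₂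
      have h2 : sub (t a y₁) (t a y₁) = sub y₁ y₁ := hinv (t a) (ht a).1 y₁ y₁
      have h3 : sub y₁ y₂ = sub y₁ y₁ := by rw [← h1, ← h]; exact h2
      obtain ⟨w, hw, hwu⟩ := hsub y₁ (sub y₁ y₁)
      exact (hwu y₁ rfl).trans (hwu y₂ h3).symm
    have hsurj : Function.Surjective (t a) :=
      Finite.surjective_of_injective hinj
    obtain ⟨y, hy⟩ := hsurj b
    exact ⟨y, hy, fun z hz => hinj (hz.trans hy.symm)⟩
end

section
/- Let (N,+,−) be a difference family biquasigroup. Then there exists a unique element o ∈ N such that b + o = b for all b ∈ N (a right additive identity), and there exists a constant e ∈ N such that a − a = e for all a ∈ N. -/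
/-- A difference family biquasigroup `(N, +, −)` has a unique right
additive identity `o`, and there is a constant `e ∈ N` with `a − a = e` for all `a`. -/
theorem dfbq_has_right_identity_and_constant_diff
    {N : Type*} [Nonempty N]
    (add sub : N → N → N)
    (haddl : ∀ a b : N, ∃! x, add a x = b)
    (haddr : ∀ a b : N, ∃! y, add y a = b)
    (hsubl : ∀ a b : N, ∃! x, sub a x = b)
    (hsubr : ∀ a b : N, ∃! y, sub y a = b)
    (hdfbq : ∀ a b c : N, sub a b = sub (add a c) (add b c)) :
    (∃! o : N, ∀ b : N, add b o = b) ∧ (∃ e : N, ∀ a : N, sub a a = e) := by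
  obtain ⟨a₀⟩ := ‹Nonempty N›
  obtain ⟨o, ho, _⟩ := haddl a₀ a₀
  have key : ∀ b : N, add b o = b := by
    intro b
    have h := hdfbq b a₀ o
    rw [ho] at h
    obtain ⟨y, hy, huniq⟩ := hsubr a₀ (sub b a₀)
    have h1 : add b o = y := huniq _ h.symm
    have h2 : b = y := huniq _ rfl
    rw [h1, ← h2]
  constructor
  · refine ⟨o, key, ?_⟩
    intro o' ho'
    obtain ⟨x, hx, huniq⟩ := haddl a₀ a₀
    rw [huniq o' (ho' a₀), huniq o ho]
  · refine ⟨sub a₀ a₀, fun a => ?_⟩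
    obtain ⟨c, hc, _⟩ := haddl a₀ a
    have := hdfbq a₀ a₀ c
    rw [hc] at this
    exact this.symm
end

section
/- Let (N,+,−,o,e) be a difference family biquasigroup. Let ē ∈ N be the unique element with e + ē = o, and define the permutations φ : x ↦ x + ē and α : x ↦ x − e of N. Define a ⊕ b = φ⁻¹(φ(a) + φ(b)) and a ⊖ b = α⁻¹(a − b). Then (N,⊕,⊖,e,e) is a difference family biquasigroup (with right ⊕-identity e and a ⊖ a = e for all a), and moreover a ⊖ e = a for all a ∈ N. -/
/-- Given a DFBQ `(N, +, −, o, e)`, let `ē` satisfy `e + ē = o` and let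
`φ : x ↦ x + ē` and `α : x ↦ x − e` (which are permutations of `N`). Defining
`a ⊕ b = φ⁻¹(φ a + φ b)` and `a ⊖ b = α⁻¹(a − b)`, the structure `(N, ⊕, ⊖, e, e)`
is a DFBQ (with right ⊕-identity `e` and `a ⊖ a = e`), and `a ⊖ e = a` for all `a`. -/
theorem dfbq_normalization
    {N : Type*}
    (add sub : N → N → N) (o e : N)
    (haddl : ∀ a b : N, ∃! x, add a x = b)
    (haddr : ∀ a b : N, ∃! y, add y a = b)
    (hsubl : ∀ a b : N, ∃! x, sub a x = b)
    (hsubr : ∀ a b : N, ∃! y, sub y a = b)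
    (hdfbq : ∀ a b c : N, sub a b = sub (add a c) (add b c))
    (ho : ∀ b : N, add b o = b)
    (he : ∀ a : N, sub a a = e)
    (ebar : N) (hebar : add e ebar = o)
    (φ α : Equiv.Perm N)
    (hφ : ∀ x : N, φ x = add x ebar)
    (hα : ∀ x : N, α x = sub x e) :
    (∀ a b : N, ∃! x, φ.symm (add (φ a) (φ x)) = b) ∧
    (∀ a b : N, ∃! y, φ.symm (add (φ y) (φ a)) = b) ∧
    (∀ a b : N, ∃! x, α.symm (sub a x) = b) ∧
    (∀ a b : N, ∃! y, α.symm (sub y a) = b) ∧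
    (∀ a b c : N,
      α.symm (sub a b) =
        α.symm (sub (φ.symm (add (φ a) (φ c))) (φ.symm (add (φ b) (φ c))))) ∧
    (∀ a : N, φ.symm (add (φ a) (φ e)) = a) ∧
    (∀ a : N, α.symm (sub a a) = e) ∧
    (∀ a : N, α.symm (sub a e) = a) := by

  have hsubφ : ∀ x y : N, sub x y = sub (φ x) (φ y) := by
    intro x y; rw [hφ, hφ]; exact hdfbq x y ebar
  refine ⟨?_, ?_, ?_, ?_, ?_, ?_, ?_, ?_⟩
  · intro a b
    obtain ⟨t, ht, hu⟩ := haddl (φ a) (φ b)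
    refine ⟨φ.symm t, by simp [ht], ?_⟩
    intro y hy
    have : add (φ a) (φ y) = φ b := by
      have := congrArg φ hy; simpa using this
    have := hu _ this
    simp [← this]
  · intro a b
    obtain ⟨t, ht, hu⟩ := haddr (φ a) (φ b)
    refine ⟨φ.symm t, by simp [ht], ?_⟩
    intro y hy
    have : add (φ y) (φ a) = φ b := by
      have := congrArg φ hy; simpa using this
    have := hu _ this
    simp [← this]
  · intro a b
    obtain ⟨t, ht, hu⟩ := hsubl a (α b)
    refine ⟨t, by simp [ht], ?_⟩
    intro y hy
    exact hu _ (by have := congrArg α hy; simpa using this)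
  · intro a b
    obtain ⟨t, ht, hu⟩ := hsubr a (α b)
    refine ⟨t, by simp [ht], ?_⟩
    intro y hy
    exact hu _ (by have := congrArg α hy; simpa using this)
  · intro a b c
    congr 1
    rw [hsubφ (φ.symm (add (φ a) (φ c))) (φ.symm (add (φ b) (φ c)))]
    simp only [Equiv.apply_symm_apply]
    rw [← hdfbq, ← hsubφ]
  · intro a
    have : φ e = o := by rw [hφ]; exact hebar
    rw [this, ho]; simp
  · intro a
    rw [he]
    have : α e = e := by rw [hα]; exact he e
    exact (Equiv.symm_apply_eq α).mpr this.symm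
  · intro a
    rw [← hα]; simp
end

section
/- Let (N,⊕,⊖,e,e) be a difference family biquasigroup with a ⊖ e = a for all a ∈ N. Let φ be a permutation of N such that a ⊖ b = φ(a) ⊖ φ(b) for all a,b ∈ N, and let α be a permutation of N with α(e) = e. Define a + b = φ(φ⁻¹(a) ⊕ φ⁻¹(b)) and a − b = α(φ⁻¹(a) ⊖ φ⁻¹(b)), and set o := φ(e). Then (N,+,−,o,e) is a difference family biquasigroup with right additive identity o and a − a = e for all a; moreover α(a) = a − e for all a, and φ(a) = a + ē for all a, where ē is the unique element with e + ē = o. -/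
/-- Given a DFBQ `(N, ⊕, ⊖, e, e)` with `a ⊖ e = a`, a permutation `φ`
preserving `⊖` (i.e. `a ⊖ b = φ a ⊖ φ b`) and a permutation `α` fixing `e`, define
`a + b = φ(φ⁻¹ a ⊕ φ⁻¹ b)`, `a − b = α(φ⁻¹ a ⊖ φ⁻¹ b)` and `o := φ e`. Then
`(N, +, −, o, e)` is a DFBQ with right additive identity `o` and `a − a = e`;
moreover `α a = a − e` for all `a`, and `φ a = a + ē` where `ē` is the unique
element with `e + ē = o`. -/
theorem dfbq_denormalization
    {N : Type*}
    (oplus ominus : N → N → N) (e : N)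
    (hoplusl : ∀ a b : N, ∃! x, oplus a x = b)
    (hoplusr : ∀ a b : N, ∃! y, oplus y a = b)
    (hominusl : ∀ a b : N, ∃! x, ominus a x = b)
    (hominusr : ∀ a b : N, ∃! y, ominus y a = b)
    (hdfbq : ∀ a b c : N, ominus a b = ominus (oplus a c) (oplus b c))
    (hid : ∀ a : N, oplus a e = a)
    (he : ∀ a : N, ominus a a = e)
    (hre : ∀ a : N, ominus a e = a)
    (φ α : Equiv.Perm N)
    (hφ : ∀ a b : N, ominus a b = ominus (φ a) (φ b))
    (hα : α e = e) :
    (∀ a b : N, ∃! x, φ (oplus (φ.symm a) (φ.symm x)) = b) ∧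
    (∀ a b : N, ∃! y, φ (oplus (φ.symm y) (φ.symm a)) = b) ∧
    (∀ a b : N, ∃! x, α (ominus (φ.symm a) (φ.symm x)) = b) ∧
    (∀ a b : N, ∃! y, α (ominus (φ.symm y) (φ.symm a)) = b) ∧
    (∀ a b c : N,
      α (ominus (φ.symm a) (φ.symm b)) =
        α (ominus (φ.symm (φ (oplus (φ.symm a) (φ.symm c))))
                  (φ.symm (φ (oplus (φ.symm b) (φ.symm c)))))) ∧
    (∀ a : N, φ (oplus (φ.symm a) (φ.symm (φ e))) = a) ∧
    (∀ a : N, α (ominus (φ.symm a) (φ.symm a)) = e) ∧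
    (∀ a : N, α a = α (ominus (φ.symm a) (φ.symm e))) ∧
    (∃! ebar : N, φ (oplus (φ.symm e) (φ.symm ebar)) = φ e) ∧
    (∀ ebar : N, φ (oplus (φ.symm e) (φ.symm ebar)) = φ e →
      ∀ a : N, φ a = φ (oplus (φ.symm a) (φ.symm ebar))) := by

  have hφ' : ∀ a b : N, ominus (φ.symm a) (φ.symm b) = ominus a b := by
    intro a b
    rw [hφ (φ.symm a) (φ.symm b)]; simp
  constructor
  · intro a b
    obtain ⟨t, ht, hu⟩ := hoplusl (φ.symm a) (φ.symm b)
    refine ⟨φ t, by simp [ht], ?_⟩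
    intro x hx
    have hx' : oplus (φ.symm a) (φ.symm x) = φ.symm b := by
      have := congrArg φ.symm hx; simpa using this
    have := hu (φ.symm x) hx'
    have := congrArg φ this; simpa using this
  refine ⟨?_, ?_, ?_, ?_, ?_, ?_, ?_, ?_, ?_⟩
  · intro a b
    obtain ⟨t, ht, hu⟩ := hoplusr (φ.symm a) (φ.symm b)
    refine ⟨φ t, by simp [ht], ?_⟩
    intro y hy
    have hy' : oplus (φ.symm y) (φ.symm a) = φ.symm b := by
      have := congrArg φ.symm hy; simpa using this
    have := hu (φ.symm y) hy'
    have := congrArg φ this; simpa using this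
  · intro a b
    obtain ⟨t, ht, hu⟩ := hominusl (φ.symm a) (α.symm b)
    refine ⟨φ t, by simp [ht], ?_⟩
    intro x hx
    have hx' : ominus (φ.symm a) (φ.symm x) = α.symm b := by
      have := congrArg α.symm hx; simpa using this
    have := hu (φ.symm x) hx'
    have := congrArg φ this; simpa using this
  · intro a b
    obtain ⟨t, ht, hu⟩ := hominusr (φ.symm a) (α.symm b)
    refine ⟨φ t, by simp [ht], ?_⟩
    intro y hy
    have hy' : ominus (φ.symm y) (φ.symm a) = α.symm b := by
      have := congrArg α.symm hy; simpa using this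
    have := hu (φ.symm y) hy'
    have := congrArg φ this; simpa using this
  · intro a b c
    simp only [Equiv.symm_apply_apply]
    rw [← hdfbq]
  · intro a
    simp [hid]
  · intro a
    simp [he, hα]
  · intro a
    rw [hφ', hre]
  · obtain ⟨t, ht, hu⟩ := hoplusl (φ.symm e) (φ.symm (φ e))
    refine ⟨φ t, by simp [ht], ?_⟩
    intro x hx
    have hx' : oplus (φ.symm e) (φ.symm x) = φ.symm (φ e) := by
      have := congrArg φ.symm hx; simpa using this
    have := hu (φ.symm x) hx'
    have := congrArg φ this; simpa using this
  · intro ebar hebar a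
    have hebar' : oplus (φ.symm e) (φ.symm ebar) = φ (φ.symm e) := by
      have := congrArg φ.symm hebar; simpa using this
    -- show φ s = oplus s t for s := φ.symm a, t := φ.symm ebar
    set s := φ.symm a
    set t := φ.symm ebar
    set u := φ.symm e
    have key : ominus (oplus s t) (oplus u t) = ominus (φ s) (φ u) := by
      rw [← hdfbq, hφ s u]
    rw [hebar'] at key
    obtain ⟨y, _, hy⟩ := hominusr (φ u) (ominus (φ s) (φ u))
    have h1 := hy (oplus s t) key
    have h2 := hy (φ s) rfl
    have ha : a = oplus s t := by
      have hsa : φ s = a := by simp [s]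
      rw [← hsa, h2, ← h1]
    exact congrArg φ ha
end

section
/- Let (N,+,−,e,e) be a difference family biquasigroup with a − e = a for all a ∈ N. Then (N,−) is a Ward quasigroup, i.e., (a−b)−(c−b) = a−c for all a,b,c ∈ N; consequently there exists a group structure (N,*,⁻¹) with identity e such that a − b = a * b⁻¹ for all a,b ∈ N, and a bijection β of N such that a + b = a * β(b) for all a,b ∈ N. In particular (N,+,−) is isotopic to a group. -/
/-- A DFBQ `(N, +, −, e, e)` with `a − e = a` for all `a` has a Ward
quasigroup difference: `(a−b)−(c−b) = a−c`; consequently there is a group structure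
`(N, *, ⁻¹)` with identity `e` satisfying `a − b = a * b⁻¹`, and a bijection `β` of
`N` with `a + b = a * β b`. In particular `(N, +, −)` is isotopic to a group. -/
theorem dfbq_isotopic_to_group
    {N : Type*}
    (add sub : N → N → N) (e : N)
    (haddl : ∀ a b : N, ∃! x, add a x = b)
    (haddr : ∀ a b : N, ∃! y, add y a = b)
    (hsubl : ∀ a b : N, ∃! x, sub a x = b)
    (hsubr : ∀ a b : N, ∃! y, sub y a = b)
    (hdfbq : ∀ a b c : N, sub a b = sub (add a c) (add b c))
    (hid : ∀ a : N, add a e = a)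
    (he : ∀ a : N, sub a a = e)
    (hre : ∀ a : N, sub a e = a) :
    (∀ a b c : N, sub (sub a b) (sub c b) = sub a c) ∧
    (∃ (mul : N → N → N) (inv : N → N),
      (∀ x y z : N, mul (mul x y) z = mul x (mul y z)) ∧
      (∀ x : N, mul x e = x) ∧
      (∀ x : N, mul e x = x) ∧
      (∀ x : N, mul x (inv x) = e) ∧
      (∀ x : N, mul (inv x) x = e) ∧
      (∀ a b : N, sub a b = mul a (inv b)) ∧
      (∃ β : Equiv.Perm N, ∀ a b : N, add a b = mul a (β b))) := by
  -- the right-inverse map for `add`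
  set g : N → N := fun b => (haddl b e).choose with hg
  have hgspec : ∀ b, add b (g b) = e := fun b => (haddl b e).choose_spec.1
  -- `sub x b = add x (g b)`
  have hsub_add : ∀ x b : N, sub x b = add x (g b) := by
    intro x b
    have := hdfbq x b (g b)
    rw [hgspec, hre] at this
    exact this
  -- Ward identity
  have ward : ∀ a b c : N, sub (sub a b) (sub c b) = sub a c := by
    intro a b c
    rw [hsub_add a b, hsub_add c b, ← hdfbq]
  -- key: sub e (sub c b) = sub b c
  have key : ∀ b c : N, sub e (sub c b) = sub b c := by
    intro b c
    have := ward b b c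
    rwa [he] at this
  -- the involution i = sub e
  have hii : ∀ x : N, sub e (sub e x) = x := by
    intro x
    have := key x e
    rwa [hre] at this
  -- left cancellation for sub
  have hcancel : ∀ a x y : N, sub a x = sub a y → x = y := by
    intro a x y h
    exact (hsubl a (sub a y)).unique h rfl
  refine ⟨ward, fun x y => sub x (sub e y), fun x => sub e x, ?_, ?_, ?_, ?_, ?_, ?_, ?_⟩
  · -- associativity
    intro x y z
    show sub (sub x (sub e y)) (sub e z) = sub x (sub e (sub y (sub e z)))
    rw [key (sub e z) y]
    set B := sub (sub e z) y with hB
    -- obtain a with sub a z = sub x (sub e y)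
    obtain ⟨a, ha, -⟩ := hsubr z (sub x (sub e y))
    have h1 : sub (sub x (sub e y)) (sub e z) = a := by
      rw [← ha, ward, hre]
    -- show sub (sub x B) z = sub x (sub e y), hence sub x B = a
    have h2 : sub (sub e y) B = z := by
      rw [hB, ward, hii]
    have h3 : sub (sub x B) z = sub x (sub e y) := by
      rw [← h2, ward]
    have h4 : sub x B = a := (hsubr z (sub x (sub e y))).unique h3 ha
    rw [h1, h4]
  · intro x; show sub x (sub e e) = x; rw [he, hre]
  · intro x; exact hii x
  · intro x; show sub x (sub e (sub e x)) = e; rw [hii, he]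
  · intro x; exact he _
  · intro a b; show sub a b = sub a (sub e (sub e b)); rw [hii]
  · -- g is bijective
    have ginj : Function.Injective g := by
      intro b b' h
      have := hsub_add b b' -- sub b b' = add b (g b')
      have h1 : sub b b = sub b b' := by
        rw [hsub_add b b, hsub_add b b', h]
      exact hcancel b b b' h1
    have gsurj : Function.Surjective g := by
      intro c
      obtain ⟨b, hb, -⟩ := haddr c e
      exact ⟨b, (haddl b e).unique (hgspec b) hb⟩
    have iinv : Function.Involutive (fun x => sub e x) := hii
    refine ⟨(Equiv.ofBijective g ⟨ginj, gsurj⟩).symm.trans iinv.toPerm, ?_⟩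
    intro a b
    show add a b = sub a (sub e (sub e ((Equiv.ofBijective g ⟨ginj, gsurj⟩).symm b)))
    rw [hii]
    have : g ((Equiv.ofBijective g ⟨ginj, gsurj⟩).symm b) = b :=
      (Equiv.ofBijective g ⟨ginj, gsurj⟩).apply_symm_apply b
    rw [hsub_add, this]
end

section
/- Let (N,*,1) be a group and let α, β be permutations of N with α(1) = 1. Define a + b = a * β(b), o = β⁻¹(1), and a − b = α(a * b⁻¹). Then (N,+,−,o,1) is a difference family biquasigroup with right additive identity o and a − a = 1 for all a. -/
/-- Let `(N, *, 1)` be a group, `α, β` permutations of `N` with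
`α 1 = 1`. With `a + b = a * β b`, `o = β⁻¹ 1` and `a − b = α (a * b⁻¹)`, the
structure `(N, +, −, o, 1)` is a DFBQ with right additive identity `o` and
`a − a = 1` for all `a`. -/
theorem group_and_perms_give_dfbq
    {N : Type*} [Group N]
    (α β : Equiv.Perm N) (hα : α 1 = 1) :
    (∀ a b : N, ∃! x, a * β x = b) ∧
    (∀ a b : N, ∃! y, y * β a = b) ∧
    (∀ a b : N, ∃! x, α (a * x⁻¹) = b) ∧
    (∀ a b : N, ∃! y, α (y * a⁻¹) = b) ∧
    (∀ a b c : N, α (a * b⁻¹) = α ((a * β c) * (b * β c)⁻¹)) ∧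
    (∀ a : N, a * β (β.symm 1) = a) ∧
    (∀ a : N, α (a * a⁻¹) = 1) := by
  refine ⟨fun a b => ⟨β.symm (a⁻¹*b), by simp, fun y hy => ?_⟩,
    fun a b => ⟨b * (β a)⁻¹, by simp, fun y hy => by rw [← hy]; simp⟩,
    fun a b => ⟨(a⁻¹ * α.symm b)⁻¹, by simp, fun y hy => ?_⟩,
    fun a b => ⟨α.symm b * a, by simp, fun y hy => ?_⟩,
    fun a b c => by group,
    fun a => by simp,
    fun a => by simp [hα]⟩
  · have := α.injective; apply β.injective; rw [show β y = a⁻¹ * b by rw [← hy]; group]; simp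
  · have : a * y⁻¹ = α.symm b := by rw [← hy]; simp
    rw [← this]; group
  · have : y * a⁻¹ = α.symm b := by rw [← hy]; simp
    rw [← this]; group
end

section
/- Every difference family biquasigroup arises from a group: if (N,+,−,o,e) is a difference family biquasigroup, then there exist a group structure (N,*,⁻¹) on N with identity element e, and permutations α, β of N with α(e) = e, such that a + b = a * β(b) for all a,b ∈ N, a − b = α(a * b⁻¹) for all a,b ∈ N, and o = β⁻¹(e). -/
/-- Every DFBQ arises from a group: if `(N, +, −, o, e)` is a DFBQ,
then there are a group structure `(N, *, ⁻¹)` with identity `e` and permutations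
`α, β` of `N` with `α e = e`, such that `a + b = a * β b`, `a − b = α (a * b⁻¹)` and
`o = β⁻¹ e`. -/
theorem dfbq_structure_theorem
    {N : Type*}
    (add sub : N → N → N) (o e : N)
    (haddl : ∀ a b : N, ∃! x, add a x = b)
    (haddr : ∀ a b : N, ∃! y, add y a = b)
    (hsubl : ∀ a b : N, ∃! x, sub a x = b)
    (hsubr : ∀ a b : N, ∃! y, sub y a = b)
    (hdfbq : ∀ a b c : N, sub a b = sub (add a c) (add b c))
    (ho : ∀ b : N, add b o = b)
    (he : ∀ a : N, sub a a = e) :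
    ∃ (mul : N → N → N) (inv : N → N) (α β : Equiv.Perm N),
      (∀ x y z : N, mul (mul x y) z = mul x (mul y z)) ∧
      (∀ x : N, mul x e = x) ∧
      (∀ x : N, mul e x = x) ∧
      (∀ x : N, mul x (inv x) = e) ∧
      (∀ x : N, mul (inv x) x = e) ∧
      α e = e ∧
      (∀ a b : N, add a b = mul a (β b)) ∧
      (∀ a b : N, sub a b = α (mul a (inv b))) ∧
      o = β.symm e := by
  classical
  -- σ b : unique solution of e + x = b
  choose σ hσ hσu using fun b => haddl e b
  -- ρ b : unique solution of b + x = e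
  choose ρ hρ hρu using fun b => haddl b e
  -- f := x ↦ sub x e is a bijection
  have hfinj : Function.Injective (fun x => sub x e) := by
    intro y y' h
    exact (hsubr e (sub y' e)).unique h rfl
  have hfsurj : Function.Surjective (fun x => sub x e) := by
    intro b
    obtain ⟨y, hy, -⟩ := hsubr e b
    exact ⟨y, hy⟩
  have hβinj : Function.Injective (fun b => add e b) := by
    intro y y' h
    exact (haddl e (add e y')).unique h rfl
  have hβsurj : Function.Surjective (fun b => add e b) := fun b => ⟨σ b, hσ b⟩
  refine ⟨fun a b => add a (σ b), fun x => add e (ρ x),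
    Equiv.ofBijective _ ⟨hfinj, hfsurj⟩, Equiv.ofBijective _ ⟨hβinj, hβsurj⟩,
    ?_, ?_, ?_, ?_, ?_, ?_, ?_, ?_, ?_⟩
  case _ =>
    -- key lemma
    have K : ∀ a b c d u : N, add b u = e → add (add b c) d = e →
        add (add a c) d = add a u := by
      intro a b c d u h1 h2
      apply hfinj
      show sub (add (add a c) d) e = sub (add a u) e
      calc sub (add (add a c) d) e
          = sub (add (add a c) d) (add (add b c) d) := by rw [h2]
        _ = sub (add a c) (add b c) := (hdfbq _ _ _).symm
        _ = sub a b := (hdfbq _ _ _).symm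
        _ = sub (add a u) (add b u) := hdfbq _ _ _
        _ = sub (add a u) e := by rw [h1]
    intro x y z
    obtain ⟨w, hw, -⟩ := haddr (σ z) e
    obtain ⟨b, hb, -⟩ := haddr (σ y) w
    have hK := fun a => K a b (σ y) (σ z) (ρ b) (hρ b) (by rw [hb]; exact hw)
    have he' := hK e
    rw [hσ y] at he'
    have hρσ : ρ b = σ (add y (σ z)) := hσu _ _ he'.symm
    show add (add x (σ y)) (σ z) = add x (σ (add y (σ z)))
    rw [hK x, hρσ]
  case _ =>
    intro x
    show add x (σ e) = x
    rw [← hσu e o (ho e), ho]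
  case _ =>
    intro x
    exact hσ x
  case _ =>
    intro x
    show add x (σ (add e (ρ x))) = e
    rw [← hσu (add e (ρ x)) (ρ x) rfl, hρ]
  case _ =>
    intro x
    -- re-derive key lemma (scoped per goal)
    have K : ∀ a b c d u : N, add b u = e → add (add b c) d = e →
        add (add a c) d = add a u := by
      intro a b c d u h1 h2
      apply hfinj
      show sub (add (add a c) d) e = sub (add a u) e
      calc sub (add (add a c) d) e
          = sub (add (add a c) d) (add (add b c) d) := by rw [h2]
        _ = sub (add a c) (add b c) := (hdfbq _ _ _).symm
        _ = sub a b := (hdfbq _ _ _).symm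
        _ = sub (add a u) (add b u) := hdfbq _ _ _
        _ = sub (add a u) e := by rw [h1]
    show add (add e (ρ x)) (σ x) = e
    obtain ⟨d0, hd0, -⟩ := haddl (add e (ρ x)) e
    have hK := fun a => K a e (ρ x) d0 o (ho e) hd0
    have hx := hK x
    rw [hρ x, ho x] at hx
    have hd0σ : d0 = σ x := hσu x d0 hx
    rw [← hd0σ]
    exact hd0
  case _ =>
    show sub e e = e
    exact he e
  case _ =>
    intro a b
    show add a b = add a (σ (add e b))
    rw [← hσu (add e b) b rfl]
  case _ =>
    intro a b
    show sub a b = sub (add a (σ (add e (ρ b)))) e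
    rw [← hσu (add e (ρ b)) (ρ b) rfl]
    calc sub a b = sub (add a (ρ b)) (add b (ρ b)) := hdfbq _ _ _
      _ = sub (add a (ρ b)) e := by rw [hρ]
  case _ =>
    rw [Equiv.eq_symm_apply]
    show add e o = e
    exact ho e
end
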